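/- arXiv:math/0201004 — 2 statements merged into one kernel-verified Lean document; each statement's English description precedes it below -/
import Mathlib

section
/- For the classical SU(2) coefficients a_±, b_± (q = 1 case), the condition that the commutators [D,α] and [D,β] are bounded for a diagonal operator D e^{(n)}_{ij} = d(n,i) e^{(n)}_{ij} implies: there exists C such that for all (n,i) with i ≥ 0, |d(n+1/2, i+1/2) - d(n,i)| ≤ C, and for all (n,i) with i ≤ 0, |d(n+1/2, i-1/2) - d(n,i)| ≤ C. More precisely, prove the coefficient estimates: max_j |b_+(n,i,j)| = ((n+i+1)/(2n+2))^{1/2} ≥ 1/√2 for i ≥ 0, and max_j a_+(n,i,j) = ((n-i+1)/(2n+2))^{1/2} ≥ 1/√2 for i ≤ 0. -/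
/- Classical (`q = 1`) coefficients, coordinates `N = 2n`, `I = n+i`, `J = n+j`:
`n-j+1 = N-J+1`, `n-i+1 = N-I+1`, `n+i+1 = I+1`, `2n+1 = N+1`, `2n+2 = N+2`;
`i ≥ 0 ↔ N ≤ 2I`, `i ≤ 0 ↔ 2I ≤ N`. -/
noncomputable def caPlus (N I J : ℕ) : ℝ :=
  Real.sqrt (((N : ℝ) - J + 1) * ((N : ℝ) - I + 1) / (((N : ℝ) + 1) * ((N : ℝ) + 2)))

noncomputable def cbPlus (N I J : ℕ) : ℝ :=
  -Real.sqrt (((N : ℝ) - J + 1) * ((I : ℝ) + 1) / (((N : ℝ) + 1) * ((N : ℝ) + 2)))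

/-! Both coefficients are antitone in `J`, so their maximum is attained at `J = 0` (`j = -n`),
where `N - J + 1 = N + 1` cancels against the denominator. The bound `1/√2` is then
`N + 2 ≤ 2 (I + 1)` for `i ≥ 0`, resp. `N + 2 ≤ 2 (N - I + 1)` for `i ≤ 0`. -/

open Finset

theorem Finset.sup'_range_succ_of_antitone {α : Type*} [LinearOrder α] {f : ℕ → α}
    (hf : Antitone f) (N : ℕ) :
    (range (N + 1)).sup' ⟨0, mem_range.2 N.succ_pos⟩ f = f 0 :=
  le_antisymm (sup'_le _ _ fun J _ => hf J.zero_le) (le_sup' f (mem_range.2 N.succ_pos))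

theorem sup'_sqrt_sub_add_one_mul_div (N : ℕ) {c : ℝ} (hc : 0 ≤ c) :
    (range (N + 1)).sup' ⟨0, mem_range.2 N.succ_pos⟩
        (fun J : ℕ => √(((N : ℝ) - J + 1) * c / (((N : ℝ) + 1) * ((N : ℝ) + 2)))) =
      √(c / ((N : ℝ) + 2)) := by
  have hanti : Antitone fun J : ℕ => √(((N : ℝ) - J + 1) * c / (((N : ℝ) + 1) * ((N : ℝ) + 2))) :=
    fun J K hJK => by
      have : (J : ℝ) ≤ K := by exact_mod_cast hJK
      dsimp only
      gcongr
  rw [sup'_range_succ_of_antitone hanti]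
  congr 1
  field_simp
  ring

theorem abs_cbPlus (N I J : ℕ) :
    |cbPlus N I J| = √(((N : ℝ) - J + 1) * ((I : ℝ) + 1) / (((N : ℝ) + 1) * ((N : ℝ) + 2))) := by
  rw [cbPlus, abs_neg, abs_of_nonneg (Real.sqrt_nonneg _)]

theorem one_div_sqrt_two_le_sqrt_div {a b : ℝ} (hb : 0 < b) (hab : b ≤ 2 * a) :
    1 / √2 ≤ √(a / b) := by
  rw [← Real.sqrt_one, ← Real.sqrt_div' 1 zero_le_two]
  refine Real.sqrt_le_sqrt ?_
  rw [div_le_div_iff₀ two_pos hb]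
  linarith

theorem stmt15 (N I : ℕ) (hI : I ≤ N) :
    ((Finset.range (N+1)).sup' ⟨0, Finset.mem_range.2 (Nat.succ_pos N)⟩
        (fun J => |cbPlus N I J|) = Real.sqrt (((I : ℝ) + 1) / ((N : ℝ) + 2))) ∧
    (N ≤ 2*I →
      1 / Real.sqrt 2 ≤ (Finset.range (N+1)).sup' ⟨0, Finset.mem_range.2 (Nat.succ_pos N)⟩
        (fun J => |cbPlus N I J|)) ∧
    ((Finset.range (N+1)).sup' ⟨0, Finset.mem_range.2 (Nat.succ_pos N)⟩
        (fun J => caPlus N I J) = Real.sqrt (((N : ℝ) - I + 1) / ((N : ℝ) + 2))) ∧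
    (2*I ≤ N →
      1 / Real.sqrt 2 ≤ (Finset.range (N+1)).sup' ⟨0, Finset.mem_range.2 (Nat.succ_pos N)⟩
        (fun J => caPlus N I J)) := by
  have hb : (range (N + 1)).sup' ⟨0, mem_range.2 N.succ_pos⟩ (fun J => |cbPlus N I J|) =
      √(((I : ℝ) + 1) / (N + 2)) := by
    simp_rw [abs_cbPlus]
    exact sup'_sqrt_sub_add_one_mul_div N (by positivity)
  have hI' : (I : ℝ) ≤ N := mod_cast hI
  have ha : (range (N + 1)).sup' ⟨0, mem_range.2 N.succ_pos⟩ (fun J => caPlus N I J) =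
      √(((N : ℝ) - I + 1) / (N + 2)) :=
    sup'_sqrt_sub_add_one_mul_div N (by linarith)
  refine ⟨hb, fun hNI => ?_, ha, fun hIN => ?_⟩
  · have hNI' : (N : ℝ) ≤ 2 * I := mod_cast hNI
    rw [hb]
    exact one_div_sqrt_two_le_sqrt_div (by positivity) (by linarith)
  · have hIN' : 2 * (I : ℝ) ≤ N := mod_cast hIN
    rw [ha]
    exact one_div_sqrt_two_le_sqrt_div (by positivity) (by linarith)
end

section
/- Let d : {(n,i) : n ∈ (1/2)ℕ, i ∈ {-n,...,n}} → ℝ satisfy: (a) there is C with |d(n+1/2, i+1/2) - d(n,i)| ≤ C whenever i ≥ 0; (b) there is C with |d(n+1/2, i-1/2) - d(n,i)| ≤ C whenever i ≤ 0; (c) |d(n+1, 0) - d(n, 0)| ≤ C for all integer n; (d) |d(n,i)| → ∞ in the sense that for all N, {(n,i) : |d(n,i)| ≤ N} is finite. Then there exist m such that all d(n,i) with n ≥ m and |i| ≤ n - m have the same sign. -/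
/-!
Away from finitely many points `|d| > C`, so a step of size at most `C` cannot change the sign
of `d`. Every point of the interior region is reached from the central column by a column path
(if `i ≤ 0`) or a row path (if `i ≥ 0`), and the central column itself is such a path, so all
these values share the sign of one central value.
-/

lemma pos_iff_pos_of_abs_sub_le {C x y : ℝ} (hx : C < |x|) (hy : C < |y|) (h : |y - x| ≤ C) :
    0 < x ↔ 0 < y := by
  rcases abs_cases x with ⟨ex, -⟩ | ⟨ex, -⟩ <;> rcases abs_cases y with ⟨ey, -⟩ | ⟨ey, -⟩ <;>
    rcases abs_le.mp h with ⟨h₁, h₂⟩ <;> constructor <;> intro <;> linarith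

lemma pos_iff_pos_of_forall_abs_sub_le {C : ℝ} {f : ℕ → ℝ} (hbig : ∀ k, C < |f k|)
    (hstep : ∀ k, |f (k + 1) - f k| ≤ C) (k : ℕ) : 0 < f 0 ↔ 0 < f k := by
  induction k with
  | zero => rfl
  | succ k ih => exact ih.trans (pos_iff_pos_of_abs_sub_le (hbig k) (hbig (k + 1)) (hstep k))

lemma exists_forall_lt_abs_of_finite {d : ℕ → ℕ → ℝ} {B : ℝ}
    (hfin : {p : ℕ × ℕ | p.2 ≤ p.1 ∧ |d p.1 p.2| ≤ B}.Finite) :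
    ∃ M, ∀ N I, I ≤ N → M ≤ N → B < |d N I| := by
  obtain ⟨M, hM⟩ := (hfin.image Prod.fst).bddAbove
  refine ⟨M + 1, fun N I hI hN => ?_⟩
  by_contra! h
  have : N ≤ M := hM ⟨(N, I), ⟨hI, h⟩, rfl⟩
  omega

section SignPropagation

variable {d : ℕ → ℕ → ℝ} {C : ℝ} {M : ℕ} (hM : ∀ N I, I ≤ N → M ≤ N → C < |d N I|)
include hM

lemma pos_iff_pos_of_column (hb : ∀ N I, I ≤ N → 2*I ≤ N → |d (N+1) I - d N I| ≤ C)
    {I : ℕ} (hI : M ≤ I) (k : ℕ) : 0 < d (2*I) I ↔ 0 < d (2*I + k) I :=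
  pos_iff_pos_of_forall_abs_sub_le (f := fun k => d (2*I + k) I)
    (fun _ => hM _ _ (by omega) (by omega)) (fun k => hb (2*I + k) I (by omega) (by omega)) k

lemma pos_iff_pos_of_row (ha : ∀ N I, I ≤ N → N ≤ 2*I → |d (N+1) (I+1) - d N I| ≤ C)
    {I : ℕ} (hI : M ≤ I) (k : ℕ) : 0 < d (2*I) I ↔ 0 < d (2*I + k) (I + k) :=
  pos_iff_pos_of_forall_abs_sub_le (f := fun k => d (2*I + k) (I + k))
    (fun _ => hM _ _ (by omega) (by omega))
    (fun k => ha (2*I + k) (I + k) (by omega) (by omega)) k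

lemma pos_iff_pos_of_center (hc : ∀ m : ℕ, |d (2*m+2) (m+1) - d (2*m) m| ≤ C)
    {I : ℕ} (hI : M ≤ I) : 0 < d (2*M) M ↔ 0 < d (2*I) I := by
  obtain ⟨k, rfl⟩ := Nat.exists_eq_add_of_le hI
  exact pos_iff_pos_of_forall_abs_sub_le (f := fun k => d (2*(M + k)) (M + k))
    (fun _ => hM _ _ (by omega) (by omega))
    (fun k => by simpa [mul_add, add_assoc] using hc (M + k)) k

lemma pos_iff_pos_of_mem_interior
    (ha : ∀ N I, I ≤ N → N ≤ 2*I → |d (N+1) (I+1) - d N I| ≤ C)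
    (hb : ∀ N I, I ≤ N → 2*I ≤ N → |d (N+1) I - d N I| ≤ C)
    (hc : ∀ m : ℕ, |d (2*m+2) (m+1) - d (2*m) m| ≤ C)
    {N I : ℕ} (hI : M ≤ I) (hN : I + M ≤ N) : 0 < d N I ↔ 0 < d (2*M) M := by
  rcases le_or_gt (2*I) N with hle | hlt
  · obtain ⟨k, rfl⟩ := Nat.exists_eq_add_of_le hle
    exact ((pos_iff_pos_of_center hM hc hI).trans (pos_iff_pos_of_column hM hb hI k)).symm
  · have hJ : M ≤ N - I := by omega
    have hrow := pos_iff_pos_of_row hM ha hJ (I - (N - I))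
    rw [show 2*(N - I) + (I - (N - I)) = N by omega, show N - I + (I - (N - I)) = I by omega]
      at hrow
    exact ((pos_iff_pos_of_center hM hc hJ).trans hrow).symm

end SignPropagation

theorem stmt17 (d : ℕ → ℕ → ℝ) (C : ℝ)
    (ha : ∀ N I, I ≤ N → N ≤ 2*I → |d (N+1) (I+1) - d N I| ≤ C)
    (hb : ∀ N I, I ≤ N → 2*I ≤ N → |d (N+1) I - d N I| ≤ C)
    (hc : ∀ m : ℕ, |d (2*m+2) (m+1) - d (2*m) m| ≤ C)
    (hfin : ∀ B : ℝ, {p : ℕ × ℕ | p.2 ≤ p.1 ∧ |d p.1 p.2| ≤ B}.Finite) :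
    ∃ m : ℕ, (∀ N I, m ≤ I → I + m ≤ N → 0 < d N I) ∨
             (∀ N I, m ≤ I → I + m ≤ N → d N I < 0) := by
  obtain ⟨M, hM⟩ := exists_forall_lt_abs_of_finite (hfin C)
  have hC : 0 ≤ C := (abs_nonneg _).trans (hc 0)
  have hsign N I (h₁ : M ≤ I) (h₂ : I + M ≤ N) := pos_iff_pos_of_mem_interior hM ha hb hc h₁ h₂
  refine ⟨M, ?_⟩
  by_cases hpos : 0 < d (2*M) M
  · exact Or.inl fun N I h₁ h₂ => (hsign N I h₁ h₂).2 hpos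
  · refine Or.inr fun N I h₁ h₂ => lt_of_le_of_ne ?_ ?_
    · exact not_lt.1 fun h => hpos ((hsign N I h₁ h₂).1 h)
    · exact abs_pos.1 (hC.trans_lt (hM N I (by omega) (by omega)))
end
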